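/- arXiv:0908.1712 — 2 statements merged into one kernel-verified Lean document; each statement's English description precedes it below -/
import Mathlib

section
/- The optimal simple symmetric decision rule for a fixed parameter vector μ = (μ₁,…,μₙ), i.e. the minimizer over measurable functions δ: ℝ → ℝ of Σᵢ E[(δ(Yᵢ) − μᵢ)²] with Yᵢ ~ N(μᵢ,1) independent, is given by δ*(u) = (Σᵢ μᵢ φ(μᵢ − u)) / (Σᵢ φ(μᵢ − u)). -/
open MeasureTheory ProbabilityTheory

/-- Standard normal density. -/
noncomputable def phi (x : ℝ) : ℝ := (Real.sqrt (2 * Real.pi))⁻¹ * Real.exp (-x ^ 2 / 2)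

lemma phi_eq_gaussianPDFReal (m y : ℝ) : phi (m - y) = gaussianPDFReal m 1 y := by
  simp only [phi, gaussianPDFReal, NNReal.coe_one, mul_one]
  congr 1
  rw [neg_div, neg_div]
  congr 2
  ring

lemma continuous_phi : Continuous phi := by
  unfold phi
  fun_prop

lemma gaussianReal_one_eq (m : ℝ) :
    gaussianReal m 1 =
      MeasureTheory.volume.withDensity
        (fun y => ((gaussianPDFReal m 1 y).toNNReal : ENNReal)) := by
  rw [gaussianReal_of_var_ne_zero m one_ne_zero]
  rfl

lemma integral_gaussianReal_one (m : ℝ) (f : ℝ → ℝ) :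
    ∫ y, f y ∂(gaussianReal m 1) = ∫ y, gaussianPDFReal m 1 y * f y := by
  rw [gaussianReal_one_eq, integral_withDensity_eq_integral_smul
    (measurable_gaussianPDFReal m 1).real_toNNReal f]
  congr 1
  ext y
  simp [NNReal.smul_def, Real.coe_toNNReal _ (gaussianPDFReal_nonneg m 1 y)]

lemma integrable_gaussianReal_one_iff (m : ℝ) (f : ℝ → ℝ) :
    Integrable f (gaussianReal m 1) ↔
      Integrable (fun y => gaussianPDFReal m 1 y * f y) MeasureTheory.volume := by
  rw [gaussianReal_one_eq,
    integrable_withDensity_iff_integrable_smul (measurable_gaussianPDFReal m 1).real_toNNReal]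
  constructor <;> intro h <;> refine h.congr (Filter.Eventually.of_forall fun y => ?_) <;>
    simp [NNReal.smul_def, Real.coe_toNNReal _ (gaussianPDFReal_nonneg m 1 y)]

lemma key_min {n : ℕ} (hn : 0 < n) (μ w : Fin n → ℝ) (hw : ∀ i, 0 < w i) (d : ℝ) :
    ∑ i, w i * ((∑ j, μ j * w j) / (∑ j, w j) - μ i) ^ 2
      ≤ ∑ i, w i * (d - μ i) ^ 2 := by
  set W := ∑ j, w j with hW
  set S := ∑ j, μ j * w j with hS
  have hWpos : 0 < W := Finset.sum_pos (fun i _ => hw i) ⟨⟨0, hn⟩, Finset.mem_univ _⟩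
  have expand : ∀ c : ℝ, ∑ i, w i * (c - μ i) ^ 2
      = c ^ 2 * W - 2 * c * S + ∑ i, w i * (μ i) ^ 2 := by
    intro c
    rw [hW, hS, Finset.mul_sum, Finset.mul_sum, ← Finset.sum_sub_distrib,
      ← Finset.sum_add_distrib]
    exact Finset.sum_congr rfl fun i _ => by ring
  rw [expand, expand]
  have h2 : d ^ 2 * W - 2 * d * S - ((S / W) ^ 2 * W - 2 * (S / W) * S)
      = W * (d - S / W) ^ 2 := by
    field_simp
    ring
  linarith [mul_nonneg hWpos.le (sq_nonneg (d - S / W)), h2]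

/-- for a fixed vector `μ`, the rule
`δ*(u) = (Σᵢ μᵢ φ(μᵢ - u)) / (Σᵢ φ(μᵢ - u))` minimizes the compound risk
`Σᵢ E[(δ(Yᵢ) - μᵢ)²]`, with `Yᵢ ~ N(μᵢ, 1)` independent, over all measurable rules `δ`
with finite risk. -/
theorem simple_symmetric_oracle_optimal
    (n : ℕ) (hn : 0 < n) (μ : Fin n → ℝ)
    (δstar : ℝ → ℝ)
    (hδstar : δstar = fun u => (∑ i, μ i * phi (μ i - u)) / (∑ i, phi (μ i - u)))
    (δ : ℝ → ℝ) (hδ : Measurable δ)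
    (hfin : ∀ i, Integrable (fun y => (δ y - μ i) ^ 2) (gaussianReal (μ i) 1)) :
    (∑ i, ∫ y, (δstar y - μ i) ^ 2 ∂(gaussianReal (μ i) 1))
      ≤ ∑ i, ∫ y, (δ y - μ i) ^ 2 ∂(gaussianReal (μ i) 1) := by
  set w : Fin n → ℝ → ℝ := fun i y => gaussianPDFReal (μ i) 1 y with hwdef
  have hwpos : ∀ i y, 0 < w i y := fun i y => gaussianPDFReal_pos _ _ _ one_ne_zero
  have hwmeas : ∀ i, Measurable (w i) := fun i => measurable_gaussianPDFReal _ _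
  -- δstar is continuous
  have hδstar_cont : Continuous δstar := by
    rw [hδstar]
    apply Continuous.div
    · exact continuous_finset_sum _ fun i _ =>
        (continuous_const.mul (continuous_phi.comp (continuous_const.sub continuous_id)))
    · exact continuous_finset_sum _ fun i _ =>
        continuous_phi.comp (continuous_const.sub continuous_id)
    · intro u
      refine ne_of_gt (Finset.sum_pos (fun i _ => ?_) ⟨⟨0, hn⟩, Finset.mem_univ _⟩)
      rw [phi_eq_gaussianPDFReal]
      exact hwpos i u
  -- pointwise inequality
  have hpoint : ∀ y, ∑ i, w i y * (δstar y - μ i) ^ 2 ≤ ∑ i, w i y * (δ y - μ i) ^ 2 := by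
    intro y
    have hδsy : δstar y = (∑ j, μ j * w j y) / (∑ j, w j y) := by
      rw [hδstar]
      simp only [phi_eq_gaussianPDFReal, hwdef]
    rw [hδsy]
    exact key_min hn μ (fun i => w i y) (fun i => hwpos i y) (δ y)
  -- integrable functions for δ
  have hgδ : ∀ i, Integrable (fun y => w i y * (δ y - μ i) ^ 2) MeasureTheory.volume :=
    fun i => (integrable_gaussianReal_one_iff (μ i) _).mp (hfin i)
  have hG : Integrable (fun y => ∑ i, w i y * (δ y - μ i) ^ 2) MeasureTheory.volume :=
    MeasureTheory.integrable_finset_sum _ fun i _ => hgδ i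
  -- each δstar term is measurable
  have hmeas_star : ∀ i, AEStronglyMeasurable (fun y => w i y * (δstar y - μ i) ^ 2)
      MeasureTheory.volume := fun i =>
    ((hwmeas i).mul (((hδstar_cont.measurable.sub measurable_const).pow_const 2))).aestronglyMeasurable
  -- each δstar term nonneg, dominated by the full δ sum
  have hnonneg_star : ∀ i y, 0 ≤ w i y * (δstar y - μ i) ^ 2 :=
    fun i y => mul_nonneg (hwpos i y).le (sq_nonneg _)
  have hdom : ∀ i y, w i y * (δstar y - μ i) ^ 2 ≤ ∑ j, w j y * (δ y - μ j) ^ 2 := by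
    intro i y
    calc w i y * (δstar y - μ i) ^ 2
        ≤ ∑ j, w j y * (δstar y - μ j) ^ 2 :=
          Finset.single_le_sum (fun j _ => hnonneg_star j y) (Finset.mem_univ i)
      _ ≤ ∑ j, w j y * (δ y - μ j) ^ 2 := hpoint y
  have hgstar : ∀ i, Integrable (fun y => w i y * (δstar y - μ i) ^ 2) MeasureTheory.volume := by
    intro i
    refine hG.mono (hmeas_star i) (Filter.Eventually.of_forall fun y => ?_)
    rw [Real.norm_eq_abs, Real.norm_eq_abs, abs_of_nonneg (hnonneg_star i y),
      abs_of_nonneg (Finset.sum_nonneg fun j _ => mul_nonneg (hwpos j y).le (sq_nonneg _))]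
    exact hdom i y
  -- rewrite gaussian integrals as Lebesgue ones
  calc (∑ i, ∫ y, (δstar y - μ i) ^ 2 ∂(gaussianReal (μ i) 1))
      = ∑ i, ∫ y, w i y * (δstar y - μ i) ^ 2 := by
        exact Finset.sum_congr rfl fun i _ => integral_gaussianReal_one (μ i) _
    _ = ∫ y, ∑ i, w i y * (δstar y - μ i) ^ 2 :=
        (MeasureTheory.integral_finset_sum _ fun i _ => hgstar i).symm
    _ ≤ ∫ y, ∑ i, w i y * (δ y - μ i) ^ 2 := by
        refine integral_mono (MeasureTheory.integrable_finset_sum _ fun i _ => hgstar i) hG ?_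
        intro y
        exact hpoint y
    _ = ∑ i, ∫ y, w i y * (δ y - μ i) ^ 2 :=
        MeasureTheory.integral_finset_sum _ fun i _ => hgδ i
    _ = ∑ i, ∫ y, (δ y - μ i) ^ 2 ∂(gaussianReal (μ i) 1) :=
        Finset.sum_congr rfl fun i _ => (integral_gaussianReal_one (μ i) _).symm
end

section
/- The variance of the Gaussian kernel density estimator at a point is bounded by the smoothed density: for Y₁,…,Yₙ independent with Yᵢ ~ N(μᵢ,1), ĝ_h(y) = (1/(nh)) Σᵢ φ((y−Yᵢ)/h) satisfies Var(ĝ_h(y)) ≤ (1/(nh√(4π))) · g*(y; h²/2 smoothing), and in particular Var(ĝ_h(y)) ≤ C·g*_{G,1}(y)/(n h) + O(1/(nh·n)) where g*_{G,1}(y) = (1/n)Σᵢ φ(y − μᵢ), for an absolute constant C when h ≤ 1. -/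
/-!
The estimator is an average of independent terms, so its variance is `(n h)⁻²` times the sum of
their variances, each at most the second moment. Since `φ(t/h)²` is `h/√(4π)` times the
`N(0, h²/2)` density at `t`, that second moment is a Gaussian convolution integral: the
product of the `N(μᵢ, 1)` and `N(y, h²/2)` densities is the `N(μᵢ, 1 + h²/2)` density at `y`
times a Gaussian density in the integration variable, which integrates to one.
-/

open MeasureTheory ProbabilityTheory

/-- Density of `N(0, v)` at `t`. -/
noncomputable def gpdf (v t : ℝ) : ℝ :=
  (Real.sqrt (2 * Real.pi * v))⁻¹ * Real.exp (-t ^ 2 / (2 * v))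

open Real
open scoped NNReal

namespace ProbabilityTheory

lemma gaussianPDFReal_mul_gaussianPDFReal (m₁ m₂ : ℝ) {v₁ v₂ : ℝ≥0} (hv₁ : v₁ ≠ 0)
    (hv₂ : v₂ ≠ 0) (x : ℝ) :
    gaussianPDFReal m₁ v₁ x * gaussianPDFReal m₂ v₂ x
      = gaussianPDFReal m₁ (v₁ + v₂) m₂
        * gaussianPDFReal ((v₂ * m₁ + v₁ * m₂) / (v₁ + v₂)) (v₁ * v₂ / (v₁ + v₂)) x := by
  have hv₁' : (0 : ℝ) < v₁ := by positivity
  have hv₂' : (0 : ℝ) < v₂ := by positivity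
  simp only [gaussianPDFReal, NNReal.coe_add, NNReal.coe_mul, NNReal.coe_div]
  have hconst : (√(2 * π * v₁))⁻¹ * (√(2 * π * v₂))⁻¹
      = (√(2 * π * (v₁ + v₂)))⁻¹ * (√(2 * π * (v₁ * v₂ / (v₁ + v₂))))⁻¹ := by
    rw [← mul_inv, ← mul_inv, ← sqrt_mul (by positivity), ← sqrt_mul (by positivity)]
    field_simp
  have hexp : -(x - m₁) ^ 2 / (2 * v₁) + -(x - m₂) ^ 2 / (2 * v₂)
      = -(m₂ - m₁) ^ 2 / (2 * (v₁ + v₂))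
        + -(x - (v₂ * m₁ + v₁ * m₂) / (v₁ + v₂)) ^ 2 / (2 * (v₁ * v₂ / (v₁ + v₂))) := by
    field_simp
    ring
  rw [mul_mul_mul_comm, hconst, ← exp_add, hexp, exp_add, mul_mul_mul_comm]

lemma integral_gaussianPDFReal_mul_gaussianPDFReal (m₁ m₂ : ℝ) {v₁ v₂ : ℝ≥0} (hv₁ : v₁ ≠ 0)
    (hv₂ : v₂ ≠ 0) :
    ∫ x, gaussianPDFReal m₁ v₁ x * gaussianPDFReal m₂ v₂ x = gaussianPDFReal m₁ (v₁ + v₂) m₂ := by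
  simp_rw [gaussianPDFReal_mul_gaussianPDFReal m₁ m₂ hv₁ hv₂, integral_const_mul]
  rw [integral_gaussianPDFReal_eq_one _ (by positivity), mul_one]

end ProbabilityTheory

lemma phi_le_inv_sqrt_two_pi (t : ℝ) : phi t ≤ (√(2 * π))⁻¹ :=
  mul_le_of_le_one_right (by positivity) (exp_le_one_iff.mpr (by nlinarith [sq_nonneg t]))

lemma sq_phi_div_sub (x y : ℝ) {h : ℝ≥0} (hh : h ≠ 0) :
    phi ((y - x) / h) ^ 2 = h / √(4 * π) * gaussianPDFReal y (h ^ 2 / 2) x := by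
  have hh' : (0 : ℝ) < h := by positivity
  simp only [phi, gaussianPDFReal, NNReal.coe_div, NNReal.coe_pow, NNReal.coe_ofNat]
  have hsqrt : √(4 * π) * √(2 * π * (h ^ 2 / 2)) = 2 * π * h := by
    rw [← sqrt_mul (by positivity), show 4 * π * (2 * π * (h ^ 2 / 2)) = (2 * π * h) ^ 2 by ring,
      sqrt_sq (by positivity)]
  have hconst : (√(2 * π))⁻¹ ^ 2 = h / √(4 * π) * (√(2 * π * (h ^ 2 / 2)))⁻¹ := by
    rw [inv_pow, sq_sqrt (by positivity), ← div_eq_mul_inv, div_div, hsqrt]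
    field_simp
  have hexp : 2 * (-((y - x) / h) ^ 2 / 2) = -(x - y) ^ 2 / (2 * (h ^ 2 / 2)) := by
    field_simp
    ring
  rw [mul_pow, hconst, ← exp_nat_mul, Nat.cast_ofNat, hexp, mul_assoc]

lemma integral_sq_phi_div_sub_gaussianReal (m y : ℝ) {v h : ℝ≥0} (hv : v ≠ 0) (hh : h ≠ 0) :
    ∫ x, phi ((y - x) / h) ^ 2 ∂gaussianReal m v
      = h / √(4 * π) * gaussianPDFReal m (v + h ^ 2 / 2) y := by
  simp_rw [integral_gaussianReal_eq_integral_smul hv, smul_eq_mul, sq_phi_div_sub _ y hh,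
    mul_left_comm _ (h / √(4 * π) : ℝ), integral_const_mul]
  rw [integral_gaussianPDFReal_mul_gaussianPDFReal m y hv (by positivity)]

lemma variance_phi_div_sub_gaussianReal_le (m y : ℝ) {v h : ℝ≥0} (hv : v ≠ 0) (hh : h ≠ 0) :
    Var[fun x ↦ phi ((y - x) / h); gaussianReal m v]
      ≤ h / √(4 * π) * gaussianPDFReal m (v + h ^ 2 / 2) y :=
  (variance_le_expectation_sq (by unfold phi; fun_prop)).trans_eq
    (integral_sq_phi_div_sub_gaussianReal m y hv hh)

lemma memLp_phi_div_sub (m y : ℝ) (v h : ℝ≥0) (p : ENNReal) :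
    MemLp (fun x ↦ phi ((y - x) / h)) p (gaussianReal m v) :=
  .of_bound (by unfold phi; fun_prop) _ (ae_of_all _ fun x ↦ by
    rw [norm_of_nonneg (by unfold phi; positivity)]; exact phi_le_inv_sqrt_two_pi _)

theorem kde_variance_bound_general
    (n : ℕ) (h : ℝ) (hh : 0 < h)
    (μ : Fin n → ℝ) (y : ℝ) :
    variance
      (fun Y : Fin n → ℝ => (1 / (n * h)) * ∑ i, phi ((y - Y i) / h))
      (Measure.pi fun i => gaussianReal (μ i) 1)
      ≤ (1 / (n * h * Real.sqrt (4 * Real.pi)))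
          * ((1 / (n : ℝ)) * ∑ i, gpdf (1 + h ^ 2 / 2) (y - μ i)) := by
  lift h to ℝ≥0 using hh.le
  have hh₀ : h ≠ 0 := by exact_mod_cast hh.ne'
  have hsum : (fun Y : Fin n → ℝ ↦ 1 / (n * h) * ∑ i, phi ((y - Y i) / h))
      = fun Y ↦ 1 / (n * h) * (∑ i, fun Y : Fin n → ℝ ↦ phi ((y - Y i) / h)) Y := by
    simp only [Finset.sum_apply]
  rw [hsum, variance_const_mul, variance_sum_pi fun i ↦ memLp_phi_div_sub (μ i) y 1 h 2]
  calc (1 / (n * h)) ^ 2 * ∑ i, Var[fun x ↦ phi ((y - x) / h); gaussianReal (μ i) 1]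
      ≤ (1 / (n * h)) ^ 2 * ∑ i, h / √(4 * π) * gpdf (1 + h ^ 2 / 2) (y - μ i) := by
        gcongr with i
        exact_mod_cast variance_phi_div_sub_gaussianReal_le (μ i) y one_ne_zero hh₀
    _ = _ := by
        rw [← Finset.mul_sum]
        field_simp

/-- variance bound for the Gaussian kernel density estimator.  For
independent `Yᵢ ~ N(μᵢ, 1)` and `ĝ_h(y) = (1/(nh)) Σᵢ φ((y - Yᵢ)/h)`,
`Var(ĝ_h(y)) ≤ (1/(n h √(4π))) · (1/n) Σᵢ φ_{1 + h²/2}(y - μᵢ)`, the mixture density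
smoothed at scale `h²/2`; in particular it is of order `g*(y)/(nh)`. -/
theorem kde_variance_bound
    (n : ℕ) (hn : 0 < n) (h : ℝ) (hh : 0 < h) (hh1 : h ≤ 1)
    (μ : Fin n → ℝ) (y : ℝ) :
    variance
      (fun Y : Fin n → ℝ => (1 / (n * h)) * ∑ i, phi ((y - Y i) / h))
      (Measure.pi fun i => gaussianReal (μ i) 1)
      ≤ (1 / (n * h * Real.sqrt (4 * Real.pi)))
          * ((1 / (n : ℝ)) * ∑ i, gpdf (1 + h ^ 2 / 2) (y - μ i)) :=
  kde_variance_bound_general n h hh μ y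
end
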